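/- Let t be a good ω-word over S = {1,2,3} of the form t = b₀·b₁·b₂·⋯ where b₀ = 1213 and each bᵢ ∈ {12, 123, 1232, 13, 1323} for i ≥ 1. If bᵢ = 12 for some i ≥ 1, then b_{i+1} = 13. -/

import Mathlib

/-!
Alphabet encodings:
* `S = {1,2,3}` is `Fin 3` with `1 ↦ 0`, `2 ↦ 1`, `3 ↦ 2` (so `1 < 2 < 3` matches `0 < 1 < 2`).
* `T = {a,b,c,d}` is `Fin 4` with `a ↦ 0`, `b ↦ 1`, `c ↦ 2`, `d ↦ 3`.
* `U = {a,c,d}` is `Fin 3` with `a ↦ 0`, `c ↦ 1`, `d ↦ 2` (so `a < c < d` matches `0 < 1 < 2`).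
-/

/-- The six forbidden factors `1231321, 1321231, 2132312, 2312132, 3123213, 3213123`
(images of the letter pattern `xyzxzyx`). -/
def Forbidden : List (List (Fin 3)) :=
  [[0,1,2,0,2,1,0], [0,2,1,0,1,2,0], [1,0,2,1,2,0,1],
   [1,2,0,1,0,2,1], [2,0,1,2,1,0,2], [2,1,0,2,0,1,2]]

/-- A finite word is square-free if it has no nonempty factor `x ++ x`. -/
def SquareFreeL {α : Type*} (w : List α) : Prop :=
  ∀ x : List α, x ≠ [] → ¬ (x ++ x) <:+: w

/-- A finite word over `S` is factor-good if no forbidden factor occurs in it. -/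
def FactorGoodL (w : List (Fin 3)) : Prop :=
  ∀ p ∈ Forbidden, ¬ p <:+: w

/-- A finite word over `S` is good if it is square-free and factor-good. -/
def GoodL (w : List (Fin 3)) : Prop := SquareFreeL w ∧ FactorGoodL w

/-- The factor of an ω-word `w` starting at position `i`, of length `n`. -/
def factorAtN {α : Type*} (w : ℕ → α) (i n : ℕ) : List α :=
  (List.range n).map fun k => w (i + k)

/-- `l` is a (finite) factor of the ω-word `w`. -/
def IsFactorN {α : Type*} (l : List α) (w : ℕ → α) : Prop :=
  ∃ i : ℕ, l = factorAtN w i l.length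

/-- An ω-word is square-free if no nonempty `x ++ x` is a factor of it. -/
def SquareFreeN {α : Type*} (w : ℕ → α) : Prop :=
  ∀ x : List α, x ≠ [] → ¬ IsFactorN (x ++ x) w

/-- An ω-word over `S` is factor-good if no forbidden factor occurs in it. -/
def FactorGoodN (w : ℕ → Fin 3) : Prop :=
  ∀ p ∈ Forbidden, ¬ IsFactorN p w

/-- An ω-word over `S` is good if it is square-free and factor-good. -/
def GoodN (w : ℕ → Fin 3) : Prop := SquareFreeN w ∧ FactorGoodN w

/-- The factor of a ℤ-word `w` starting at position `i`, of length `n`. -/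
def factorAtZ {α : Type*} (w : ℤ → α) (i : ℤ) (n : ℕ) : List α :=
  (List.range n).map fun k => w (i + k)

/-- `l` is a (finite) factor of the ℤ-word `w`. -/
def IsFactorZ {α : Type*} (l : List α) (w : ℤ → α) : Prop :=
  ∃ i : ℤ, l = factorAtZ w i l.length

/-- A ℤ-word is square-free if no nonempty `x ++ x` is a factor of it. -/
def SquareFreeZ {α : Type*} (w : ℤ → α) : Prop :=
  ∀ x : List α, x ≠ [] → ¬ IsFactorZ (x ++ x) w

/-- A ℤ-word over `S` is factor-good if no forbidden factor occurs in it. -/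
def FactorGoodZ (w : ℤ → Fin 3) : Prop :=
  ∀ p ∈ Forbidden, ¬ IsFactorZ p w

/-- A ℤ-word over `S` is good if it is square-free and factor-good. -/
def GoodZ (w : ℤ → Fin 3) : Prop := SquareFreeZ w ∧ FactorGoodZ w

/-- The ω-word `w` is the infinite concatenation `blocks 0 · blocks 1 · blocks 2 ⋯`. -/
def NConcat {α : Type*} (w : ℕ → α) (blocks : ℕ → List α) : Prop :=
  ∃ p : ℕ → ℕ, p 0 = 0 ∧ (∀ i, p (i + 1) = p i + (blocks i).length) ∧
    ∀ i, blocks i = factorAtN w (p i) (blocks i).length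

/-- The ℤ-word `w` is the bi-infinite concatenation `⋯ blocks (-1) · blocks 0 · blocks 1 ⋯`
(up to a shift of indexing). -/
def ZConcat {α : Type*} (w : ℤ → α) (blocks : ℤ → List α) : Prop :=
  ∃ p : ℤ → ℤ, (∀ i, p (i + 1) = p i + (blocks i).length) ∧
    ∀ i, blocks i = factorAtZ w (p i) (blocks i).length

/-- The morphism `f : T* → S*` on letters:
`f(a) = 1213`, `f(b) = 123`, `f(c) = 1323`, `f(d) = 1232`. -/
def fL : Fin 4 → List (Fin 3) := ![[0,1,0,2], [0,1,2], [0,2,1,2], [0,1,2,1]]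

/-- The morphism `f : T* → S*` on finite words. -/
def fW (v : List (Fin 4)) : List (Fin 3) := (v.map fL).flatten

/-- The inclusion `U → T`: `a ↦ a`, `c ↦ c`, `d ↦ d`. -/
def uT : Fin 3 → Fin 4 := ![0, 2, 3]

/-- Does `g` insert the letter `b` between `x` and `y`?  True exactly for the
pairs `ac`, `da`, `dc`. -/
def needB (x y : Fin 3) : Bool :=
  (x == 0 && y == 1) || (x == 2 && y == 0) || (x == 2 && y == 1)

/-- The map `g : U* → T*`, replacing each factor `ac` by `abc`, `da` by `dba`
and `dc` by `dbc`. -/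
def gW : List (Fin 3) → List (Fin 4)
  | [] => []
  | [x] => [uT x]
  | x :: y :: r => (uT x :: (if needB x y then [(1 : Fin 4)] else [])) ++ gW (y :: r)

/-- The block of `f(g(u))` contributed by position `i` of the ω-word `u` over `U`:
the `f`-image of `u i`, followed by `f(b) = 123` when `g` inserts a `b` after `u i`. -/
def fgBlockN (u : ℕ → Fin 3) (i : ℕ) : List (Fin 3) :=
  fL (uT (u i)) ++ (if needB (u i) (u (i + 1)) then fL 1 else [])

/-- The block of `f(g(u))` contributed by position `i` of the ℤ-word `u` over `U`. -/
def fgBlockZ (u : ℤ → Fin 3) (i : ℤ) : List (Fin 3) :=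
  fL (uT (u i)) ++ (if needB (u i) (u (i + 1)) then fL 1 else [])

/-- The letter permutation `π` of `S`: fixes `1`, interchanges `2` and `3`. -/
def pi3 : Fin 3 → Fin 3 := ![0, 2, 1]

/-- Lexicographic order on ω-words: `v ≤ w` iff `v = w` or at the first index
where they differ the letter of `v` is smaller. -/
def LexLeN {α : Type*} [LinearOrder α] (v w : ℕ → α) : Prop :=
  v = w ∨ ∃ n : ℕ, (∀ k < n, v k = w k) ∧ v n < w n


/-!
The block after `12` starts with `1`, so it is `13` or `1323`: otherwise `1212` is a square.
If it were `1323`, the next block `y` again starts with `1`, and `12 · 1323 · y · 1` contains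
the forbidden factor `2132312` (when `y` starts with `12`), the square `3131` (when `y = 13`)
or the square `13231323` (when `y = 1323`).
-/

section OmegaWord

variable {α : Type*} {w : ℕ → α}

@[simp]
lemma length_factorAtN (w : ℕ → α) (i n : ℕ) : (factorAtN w i n).length = n := by
  simp [factorAtN]

lemma factorAtN_add (w : ℕ → α) (i m n : ℕ) :
    factorAtN w i (m + n) = factorAtN w i m ++ factorAtN w (i + m) n := by
  simp [factorAtN, List.range_add, add_assoc]

lemma IsFactorN.of_infix {l u : List α} (hl : IsFactorN l w) (hu : u <:+: l) :
    IsFactorN u w := by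
  obtain ⟨s, r, rfl⟩ := hu
  obtain ⟨i, hi⟩ := hl
  refine ⟨i + s.length, ?_⟩
  simp only [List.length_append, factorAtN_add] at hi
  exact (List.append_inj (List.append_inj hi (by simp)).1 (by simp)).2

lemma NConcat.isFactorN_flatten {b : ℕ → List α} (h : NConcat w b) (i k : ℕ) :
    IsFactorN ((List.range k).map fun j => b (i + j)).flatten w := by
  obtain ⟨p, -, hp, hb⟩ := h
  set F : ℕ → List α := fun k => ((List.range k).map fun j => b (i + j)).flatten with hF
  suffices ∀ k, p (i + k) = p i + (F k).length ∧ F k = factorAtN w (p i) (F k).length from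
    ⟨p i, (this k).2⟩
  intro k
  induction k with
  | zero => simp [hF, factorAtN]
  | succ k ih =>
    have hFsucc : F (k + 1) = F k ++ b (i + k) := by simp [hF, List.range_succ]
    rw [hFsucc, List.length_append, factorAtN_add, ← ih.1, ← ih.2, ← hb, ← add_assoc, hp, ih.1]
    exact ⟨add_assoc .., rfl⟩

end OmegaWord

lemma SquareFreeN.squareFreeL {α : Type*} {w : ℕ → α} {l : List α} (h : SquareFreeN w)
    (hl : IsFactorN l w) : SquareFreeL l :=
  fun x hx hxl => h x hx (hl.of_infix hxl)

lemma FactorGoodN.factorGoodL {w : ℕ → Fin 3} {l : List (Fin 3)} (h : FactorGoodN w)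
    (hl : IsFactorN l w) : FactorGoodL l :=
  fun p hp hpl => h p hp (hl.of_infix hpl)

lemma GoodN.goodL {w : ℕ → Fin 3} {l : List (Fin 3)} (h : GoodN w) (hl : IsFactorN l w) :
    GoodL l :=
  ⟨h.1.squareFreeL hl, h.2.factorGoodL hl⟩

/-- The blocks `12, 123, 1232, 13, 1323`. -/
def innerBlocks : List (List (Fin 3)) := [[0,1], [0,1,2], [0,1,2,1], [0,2], [0,2,1,2]]

lemma exists_eq_zero_cons_of_mem_innerBlocks {x : List (Fin 3)} (hx : x ∈ innerBlocks) :
    ∃ z, x = 0 :: z := by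
  simp only [innerBlocks, List.mem_cons, List.not_mem_nil, or_false] at hx
  rcases hx with rfl | rfl | rfl | rfl | rfl <;> exact ⟨_, rfl⟩

lemma eq_13_of_goodL_12_append {x y : List (Fin 3)} (hx : x ∈ innerBlocks)
    (hy : y ∈ innerBlocks) (h : GoodL ([0,1] ++ x ++ y ++ [0])) : x = [0,2] := by
  simp only [innerBlocks, List.mem_cons, List.not_mem_nil, or_false] at hx hy
  rcases hx with rfl | rfl | rfl | rfl | rfl
  any_goals exact absurd ⟨[], _, rfl⟩ (h.1 [0,1] (by simp))
  · rfl
  rcases hy with rfl | rfl | rfl | rfl | rfl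
  any_goals exact absurd ⟨[0], _, rfl⟩ (h.2 [1,0,2,1,2,0,1] (by decide))
  · exact absurd (by decide) (h.1 [2,0] (by simp))
  · exact absurd (by decide) (h.1 [0,2,1,2] (by simp))

theorem stmt_11_general (b : ℕ → List (Fin 3))
    (hb : ∀ i, 1 ≤ i → b i ∈ [[0,1], [0,1,2], [0,1,2,1], [0,2], [0,2,1,2]])
    (t : ℕ → Fin 3) (ht : NConcat t b) (hg : GoodN t)
    (i : ℕ) (h12 : b i = [0,1]) :
    b (i + 1) = [0,2] := by
  obtain ⟨z, hz⟩ := exists_eq_zero_cons_of_mem_innerBlocks (hb (i + 3) (by omega))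
  have hwindow : IsFactorN ([0,1] ++ b (i + 1) ++ b (i + 2) ++ [0]) t := by
    refine (ht.isFactorN_flatten i 4).of_infix ⟨[], z, ?_⟩
    simp [List.range_succ, h12, hz]
  exact eq_13_of_goodL_12_append (hb _ (by omega)) (hb _ (by omega)) (hg.goodL hwindow)

/-- For a good ω-word `t = b₀·b₁·b₂⋯` with `b₀ = 1213` and each
`bᵢ ∈ {12,123,1232,13,1323}` for `i ≥ 1`: if `bᵢ = 12` for some `i ≥ 1`,
then `b_{i+1} = 13`. -/
theorem stmt_11 (b : ℕ → List (Fin 3)) (hb0 : b 0 = [0,1,0,2])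
    (hb : ∀ i, 1 ≤ i → b i ∈ [[0,1], [0,1,2], [0,1,2,1], [0,2], [0,2,1,2]])
    (t : ℕ → Fin 3) (ht : NConcat t b) (hg : GoodN t)
    (i : ℕ) (hi : 1 ≤ i) (h12 : b i = [0,1]) :
    b (i + 1) = [0,2] :=
  stmt_11_general b hb t ht hg i h12
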